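/- arXiv:2605.24673 — 2 statements merged into one kernel-verified Lean document; each statement's English description precedes it below -/
import Mathlib

section
/- For all real numbers n ≥ 1 and k with 1 ≤ k ≤ n/2, the inequality √n + (√32) k / n ≥ √( n(n+4)² + 32k² − 32k ) / (n+4) holds. -/
open MeasureTheory ProbabilityTheory Filter Matrix
open scoped ENNReal NNReal BigOperators

noncomputable section

/-- Euclidean distance between two vectors in `ℝ^p`. -/
def dist2 {p : ℕ} (a b : Fin p → ℝ) : ℝ := Real.sqrt (∑ l, (a l - b l) ^ 2)

/-- `E : Ω → ℝ^{n×p}` has independent, mean-zero rows whose sub-Gaussian norm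
`‖E_i‖_{ψ₂} = sup_{‖v‖=1} inf {K > 0 : 𝔼 exp((vᵀE_i)²/K²) ≤ 2}` is at most `σ`. -/
def HasIndepSubGaussianRows {Ω : Type} [MeasurableSpace Ω] (μ : Measure Ω)
    {n p : ℕ} (E : Ω → Matrix (Fin n) (Fin p) ℝ) (σ : ℝ) : Prop :=
  iIndepFun (m := fun _ : Fin n => (inferInstance : MeasurableSpace (Fin p → ℝ)))
      (fun i ω => E ω i) μ ∧
  (∀ i l, ∫ ω, E ω i l ∂μ = 0) ∧
  (∀ i, ∀ v : Fin p → ℝ, ∑ l, (v l) ^ 2 = 1 → ∀ K : ℝ, σ < K →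
    ∫ ω, Real.exp ((∑ l, v l * E ω i l) ^ 2 / K ^ 2) ∂μ ≤ 2)

/-- Index type for the potential edges `{(j,k) : j < k}` of a graph on `Fin n`. -/
abbrev EdgeIdx (n : ℕ) := {e : Fin n × Fin n // e.1 < e.2}

/-- Oriented edge-incidence matrix of the affinity matrix `Φ`: the column indexed by a
pair `(j,k)` with `j < k` has entry `√Φ_jk` in row `j`, `-√Φ_jk` in row `k` and zeros
elsewhere (pairs that are not edges contribute zero columns). -/
def incidence {n : ℕ} (Φ : Matrix (Fin n) (Fin n) ℝ) : Matrix (Fin n) (EdgeIdx n) ℝ :=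
  Matrix.of fun i e =>
    if i = e.val.1 then Real.sqrt (Φ e.val.1 e.val.2)
    else if i = e.val.2 then -Real.sqrt (Φ e.val.1 e.val.2) else 0

/-- The four Penrose conditions: `B` is the Moore–Penrose pseudoinverse of `A`. -/
def IsPInv {m n : Type} [Fintype m] [Fintype n]
    (A : Matrix m n ℝ) (B : Matrix n m ℝ) : Prop :=
  A * B * A = A ∧ B * A * B = B ∧ (A * B)ᵀ = A * B ∧ (B * A)ᵀ = B * A

/-- Maximal absolute entry `‖M‖_max` of a matrix. -/
def maxEntry {m n : Type} [Fintype m] [Fintype n] (M : Matrix m n ℝ) : ℝ :=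
  ⨆ i, ⨆ j, |M i j|

/-- The graph whose edges are the pairs with strictly positive affinity. -/
def graphOf {n : ℕ} (Φ : Matrix (Fin n) (Fin n) ℝ) : SimpleGraph (Fin n) :=
  SimpleGraph.fromRel fun i j => 0 < Φ i j

/-- A valid affinity matrix: symmetric, nonnegative entries, zero diagonal, connected. -/
def IsValidAffinity {n : ℕ} (Φ : Matrix (Fin n) (Fin n) ℝ) : Prop :=
  Φᵀ = Φ ∧ (∀ i j, 0 ≤ Φ i j) ∧ (∀ i, Φ i i = 0) ∧ (graphOf Φ).Connected

/-- The convex clustering penalty `Σ_{i<j} √Φ_ij ‖U_{i·} - U_{j·}‖₂`. -/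
def penaltySum {n p : ℕ} (Φ : Matrix (Fin n) (Fin n) ℝ)
    (U : Matrix (Fin n) (Fin p) ℝ) : ℝ :=
  ∑ e : EdgeIdx n, Real.sqrt (Φ e.val.1 e.val.2) * dist2 (U e.val.1) (U e.val.2)

/-- The convex clustering objective
`U ↦ γ Σ_{i<j} √Φ_ij ‖U_{i·} - U_{j·}‖₂ + (1/2) ‖U - X‖_F²`. -/
def ccObj {n p : ℕ} (γ : ℝ) (Φ : Matrix (Fin n) (Fin n) ℝ)
    (X U : Matrix (Fin n) (Fin p) ℝ) : ℝ :=
  γ * penaltySum Φ U + (1 / 2) * ∑ i, ∑ l, (U i l - X i l) ^ 2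

/-- Diameter `max_{a,b ∈ C} ‖a - b‖₂` of a finite set of centers. -/
def diamC {p : ℕ} (C : Finset (Fin p → ℝ)) : ℝ :=
  ⨆ a : C, ⨆ b : C, dist2 a.val b.val

/-- Graph Laplacian `L = D - Φ`. -/
def lap {n : ℕ} (Φ : Matrix (Fin n) (Fin n) ℝ) : Matrix (Fin n) (Fin n) ℝ :=
  Matrix.diagonal (fun i => ∑ j, Φ i j) - Φ

/-- Two-cluster membership (clusters `{0,…,n/2-1}` and `{n/2,…,n-1}`). -/
def sameCluster {n : ℕ} (i j : Fin n) : Prop := ((i : ℕ) < n / 2 ↔ (j : ℕ) < n / 2)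

instance {n : ℕ} (i j : Fin n) : Decidable (sameCluster i j) := by
  unfold sameCluster; infer_instance

/-- `Φ` is the adjacency matrix of the two-cluster stochastic block model with
within-cluster probability `pw` and between-cluster probability `pb`. -/
def IsSBM {Ω : Type} [MeasurableSpace Ω] (μ : Measure Ω) {n : ℕ}
    (Φ : Ω → Matrix (Fin n) (Fin n) ℝ) (pw pb : ℝ) : Prop :=
  (∀ ω, (Φ ω)ᵀ = Φ ω) ∧ (∀ ω i, Φ ω i i = 0) ∧
  (∀ ω i j, Φ ω i j = 0 ∨ Φ ω i j = 1) ∧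
  iIndepFun (m := fun _ : EdgeIdx n => (inferInstance : MeasurableSpace ℝ))
    (fun e ω => Φ ω e.val.1 e.val.2) μ ∧
  (∀ e : EdgeIdx n, μ {ω | Φ ω e.val.1 e.val.2 = 1} =
      ENNReal.ofReal (if sameCluster e.val.1 e.val.2 then pw else pb))

/-- The matrix whose first `n/2` rows equal `c₁` and remaining rows equal `c₂`. -/
def twoClusterU (n : ℕ) {p : ℕ} (c₁ c₂ : Fin p → ℝ) : Matrix (Fin n) (Fin p) ℝ :=
  Matrix.of fun i l => if (i : ℕ) < n / 2 then c₁ l else c₂ l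

/-- `Σ_{(i,j) ∈ E} Φ_ij ‖U_{i·} - U_{j·}‖₂` (for a 0/1 matrix `Φ`, the sum of
`‖U_{i·} - U_{j·}‖₂` over the edges `i < j` with `Φ_ij = 1`). -/
def cutSum {n p : ℕ} (Φv : Matrix (Fin n) (Fin n) ℝ)
    (U : Matrix (Fin n) (Fin p) ℝ) : ℝ :=
  ∑ e : EdgeIdx n, Φv e.val.1 e.val.2 * dist2 (U e.val.1) (U e.val.2)

/-- Adjacency matrix of the advantageous two-clique graph `G(n,k)`: two cliques on
`{0,…,n/2-1}` and `{n/2,…,n-1}` together with the `k` bridges `{i, i+n/2}`, `i < k`. -/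
def advPhi (n k : ℕ) : Matrix (Fin n) (Fin n) ℝ :=
  Matrix.of fun i j =>
    if i ≠ j ∧ (((i : ℕ) < n / 2 ∧ (j : ℕ) < n / 2) ∨
        (n / 2 ≤ (i : ℕ) ∧ n / 2 ≤ (j : ℕ)) ∨
        ((j : ℕ) = (i : ℕ) + n / 2 ∧ (i : ℕ) < k) ∨
        ((i : ℕ) = (j : ℕ) + n / 2 ∧ (j : ℕ) < k))
    then 1 else 0

/-- The `n×n` matrix `(1/n) 1_n 1_nᵀ`. -/
def onesProj (n : ℕ) : Matrix (Fin n) (Fin n) ℝ :=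
  Matrix.of fun _ _ => (1 : ℝ) / n

/-- Expected adjacency matrix `B ⊗ J - p_w I_n` of the two-cluster stochastic block
model (clusters being the first and last `n/2` indices). -/
def sbmExpected (n : ℕ) (pw pb : ℝ) : Matrix (Fin n) (Fin n) ℝ :=
  Matrix.of fun i j =>
    (if ((i : ℕ) < n / 2 ↔ (j : ℕ) < n / 2) then pw else pb) -
      (if i = j then pw else 0)

end

lemma Real.sqrt_add_le_sqrt_add_sqrt {x y : ℝ} (hx : 0 ≤ x) (hy : 0 ≤ y) :
    √(x + y) ≤ √x + √y := by
  rw [Real.sqrt_le_iff]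
  refine ⟨by positivity, ?_⟩
  nlinarith [Real.sq_sqrt hx, Real.sq_sqrt hy, Real.sqrt_nonneg x, Real.sqrt_nonneg y]

lemma Real.sqrt_mul_sq_add_mul_sq_le {x y a b : ℝ} (hx : 0 ≤ x) (hy : 0 ≤ y) (ha : 0 ≤ a)
    (hb : 0 ≤ b) : √(x * a ^ 2 + y * b ^ 2) ≤ √x * a + √y * b := by
  calc √(x * a ^ 2 + y * b ^ 2) ≤ √(x * a ^ 2) + √(y * b ^ 2) :=
        Real.sqrt_add_le_sqrt_add_sqrt (by positivity) (by positivity)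
    _ = √x * a + √y * b := by
        rw [Real.sqrt_mul hx, Real.sqrt_mul hy, Real.sqrt_sq ha, Real.sqrt_sq hb]

/-- elementary inequality used for the advantageous graph. -/
theorem stmt13 :
    ∀ n k : ℝ, 1 ≤ n → 1 ≤ k → k ≤ n / 2 →
      Real.sqrt (n * (n + 4) ^ 2 + 32 * k ^ 2 - 32 * k) / (n + 4) ≤
        Real.sqrt n + Real.sqrt 32 * k / n := by
  intro n k hn hk _
  have hn4 : 0 < n + 4 := by linarith
  calc √(n * (n + 4) ^ 2 + 32 * k ^ 2 - 32 * k) / (n + 4)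
      ≤ √(n * (n + 4) ^ 2 + 32 * k ^ 2) / (n + 4) := by gcongr; linarith
    _ ≤ (√n * (n + 4) + √32 * k) / (n + 4) := by
        gcongr
        exact Real.sqrt_mul_sq_add_mul_sq_le (by linarith) (by norm_num) hn4.le (by linarith)
    _ = √n + √32 * k / (n + 4) := by field_simp
    _ ≤ √n + √32 * k / n := by gcongr; linarith
end

section
/- Let n ≥ 6 be even and 1 ≤ k ≤ n/2, let G(n,k) be the advantageous two-clique graph with Laplacian L, and let L†_{·j} denote the j-th column of the Moore–Penrose pseudoinverse of L. Then for every bridge edge {i, i+n/2} with 1 ≤ i ≤ k, ‖L†_{·i} − L†_{·(i+n/2)}‖₂² = ( n(n+4)² + 32k² − 32k ) / ( 4k²(n+4)² ), and every edge (j,ℓ) of G(n,k) satisfies ‖L†_{·j} − L†_{·ℓ}‖₂² ≤ ( n(n+4)² + 32k² − 32k ) / ( 4k²(n+4)² ); i.e., the maximum of ‖L†_{·j} − L†_{·ℓ}‖₂² over edges of G(n,k) is attained at the bridge edges. -/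
open MeasureTheory ProbabilityTheory Filter Matrix
open scoped ENNReal NNReal BigOperators

/-!
Relabel the vertices of `G(n,k)`, `n = 2m`, as two copies of `Fin m`. The Laplacian becomes
`[[U, -E], [-E, U]]` with `E` the diagonal 0/1 matrix of the bridges, and such a matrix is
block-diagonalised by the vectors `(x, x)` and `(x, -x)`: it acts as `A = U - E = m I - J` on the
first and as `B = U + E = diag(m + 2·[p < k]) - J` on the second. Hence
`L† = ½ [[A† + B⁻¹, A† - B⁻¹], [A† - B⁻¹, A† + B⁻¹]]`, where `A† = m⁻¹ (I - J/m)` and `B⁻¹` is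
given by the Sherman–Morrison formula. A bridge `{p, p'}` then has squared column distance
`2 ‖B⁻¹ e_p‖²`, an edge `{p, q}` inside a clique has `½ (‖A† (e_p - e_q)‖² + ‖B⁻¹ (e_p - e_q)‖²)`,
and the claim reduces to explicit rational inequalities in `m` and `k`.
-/

namespace IsPInv

variable {ι κ : Type} [Fintype ι] [Fintype κ]

theorem unique {A B B' : Matrix ι ι ℝ} (h : IsPInv A B) (h' : IsPInv A B') : B = B' := by
  obtain ⟨h₁, h₂, h₃, h₄⟩ := h
  obtain ⟨h₁', h₂', h₃', h₄'⟩ := h'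
  have hAB : A * B' = A * B := by
    calc A * B' = (A * B * A) * B' := by rw [h₁]
      _ = (A * B)ᵀ * (A * B')ᵀ := by rw [h₃, h₃', Matrix.mul_assoc _ A]
      _ = (A * B' * A * B)ᵀ := by simp only [transpose_mul, Matrix.mul_assoc]
      _ = A * B := by rw [h₁', h₃]
  have hBA : B' * A = B * A := by
    calc B' * A = B' * (A * B * A) := by rw [h₁]
      _ = (B' * A)ᵀ * (B * A)ᵀ := by rw [h₄, h₄', Matrix.mul_assoc B', Matrix.mul_assoc]
      _ = (B * (A * B' * A))ᵀ := by simp only [transpose_mul, Matrix.mul_assoc]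
      _ = B * A := by rw [h₁', h₄]
  calc B = B * (A * B') := by rw [hAB, ← Matrix.mul_assoc, h₂]
    _ = B' := by rw [← Matrix.mul_assoc, ← hBA, h₂']

theorem submatrix [DecidableEq ι] [DecidableEq κ] {A B : Matrix κ κ ℝ} (h : IsPInv A B)
    (e : ι ≃ κ) : IsPInv (A.submatrix e e) (B.submatrix e e) := by
  obtain ⟨h₁, h₂, h₃, h₄⟩ := h
  simp only [IsPInv, submatrix_mul_equiv, transpose_submatrix, h₁, h₂, h₃, h₄, and_self]

theorem of_mul_eq_one [DecidableEq ι] {A B : Matrix ι ι ℝ} (h : A * B = 1) : IsPInv A B := by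
  have h' : B * A = 1 := mul_eq_one_comm.mp h
  simp only [IsPInv, h, h', Matrix.one_mul, transpose_one, and_self]

theorem smul_of_isIdempotentElem {P : Matrix ι ι ℝ} (hP : IsIdempotentElem P) (hPt : Pᵀ = P)
    {c : ℝ} (hc : c ≠ 0) : IsPInv (c • P) (c⁻¹ • P) := by
  have hcP : c • P * c⁻¹ • P = P := by
    rw [smul_mul_smul_comm, hP.eq, mul_inv_cancel₀ hc, one_smul]
  have hPc : c⁻¹ • P * c • P = P := by
    rw [smul_mul_smul_comm, hP.eq, inv_mul_cancel₀ hc, one_smul]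
  refine ⟨?_, ?_, ?_, ?_⟩
  · rw [hcP, Matrix.mul_smul, hP.eq]
  · rw [hPc, Matrix.mul_smul, hP.eq]
  · rw [hcP, hPt]
  · rw [hPc, hPt]

end IsPInv

section ColDistSq

variable {ι : Type} [Fintype ι]

def colDistSq (N : Matrix ι ι ℝ) (a b : ι) : ℝ := ∑ r, (N r a - N r b) ^ 2

theorem colDistSq_comm (N : Matrix ι ι ℝ) (a b : ι) : colDistSq N a b = colDistSq N b a := by
  simp only [colDistSq, sub_sq_comm (N _ a)]

theorem colDistSq_submatrix {κ : Type} [Fintype κ] (N : Matrix κ κ ℝ) (e : ι ≃ κ) (a b : ι) :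
    colDistSq (N.submatrix e e) a b = colDistSq N (e a) (e b) :=
  e.sum_comp fun r => (N r (e a) - N r (e b)) ^ 2

variable [DecidableEq ι]

theorem sum_sq_ite_add (p : ι) (a : ℝ) (w : ι → ℝ) :
    ∑ r, ((if r = p then a else 0) + w r) ^ 2 = a ^ 2 + 2 * a * w p + ∑ r, w r ^ 2 := by
  simp [add_sq, Finset.sum_add_distrib, ite_pow, ite_mul]

theorem sum_sq_ite_sub_ite_add {p q : ι} (hpq : p ≠ q) (a b : ℝ) (w : ι → ℝ) :
    ∑ r, ((if r = p then a else 0) - (if r = q then b else 0) + w r) ^ 2 =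
      a ^ 2 + b ^ 2 + 2 * (a * w p - b * w q) + ∑ r, w r ^ 2 := by
  have h : ∀ r, (if r = p then a else 0) - (if r = q then b else 0) + w r =
      (if r = p then a else 0) + ((if r = q then -b else 0) + w r) := fun r => by
    split_ifs <;> ring
  simp only [h, sum_sq_ite_add, if_neg hpq]
  ring

end ColDistSq

section SumDiffBlocks

variable {ι : Type}

/-- The block matrix acting as `P` on the vectors `(x, x)` and as `Q` on the vectors `(x, -x)`. -/
noncomputable def sumDiffBlocks (P Q : Matrix ι ι ℝ) : Matrix (ι ⊕ ι) (ι ⊕ ι) ℝ :=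
  fromBlocks ((1 / 2 : ℝ) • (P + Q)) ((1 / 2 : ℝ) • (P - Q))
    ((1 / 2 : ℝ) • (P - Q)) ((1 / 2 : ℝ) • (P + Q))

theorem fromBlocks_eq_sumDiffBlocks (X Y : Matrix ι ι ℝ) :
    fromBlocks X Y Y X = sumDiffBlocks (X + Y) (X - Y) := by
  unfold sumDiffBlocks
  congr 1 <;> module

theorem transpose_sumDiffBlocks (P Q : Matrix ι ι ℝ) :
    (sumDiffBlocks P Q)ᵀ = sumDiffBlocks Pᵀ Qᵀ := by
  simp only [sumDiffBlocks, fromBlocks_transpose, transpose_smul, transpose_add, transpose_sub]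

variable [Fintype ι]

theorem sumDiffBlocks_mul (P Q P' Q' : Matrix ι ι ℝ) :
    sumDiffBlocks P Q * sumDiffBlocks P' Q' = sumDiffBlocks (P * P') (Q * Q') := by
  simp only [sumDiffBlocks, fromBlocks_multiply, smul_mul_smul_comm, Matrix.add_mul,
    Matrix.mul_add, Matrix.sub_mul, Matrix.mul_sub]
  congr 1 <;> module

theorem IsPInv.sumDiffBlocks {P Q P' Q' : Matrix ι ι ℝ} (h : IsPInv P P') (h' : IsPInv Q Q') :
    IsPInv (sumDiffBlocks P Q) (sumDiffBlocks P' Q') := by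
  obtain ⟨h₁, h₂, h₃, h₄⟩ := h
  obtain ⟨h₁', h₂', h₃', h₄'⟩ := h'
  simp only [IsPInv, sumDiffBlocks_mul, transpose_sumDiffBlocks, h₁, h₂, h₃, h₄, h₁', h₂', h₃',
    h₄', and_self]

theorem colDistSq_sumDiffBlocks_inl_inl (P Q : Matrix ι ι ℝ) (p q : ι) :
    colDistSq (sumDiffBlocks P Q) (.inl p) (.inl q) = (colDistSq P p q + colDistSq Q p q) / 2 := by
  simp only [colDistSq, Fintype.sum_sum_type, sumDiffBlocks, fromBlocks_apply₁₁,
    fromBlocks_apply₂₁, Matrix.smul_apply, Matrix.add_apply, Matrix.sub_apply, smul_eq_mul,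
    ← Finset.sum_add_distrib, Finset.sum_div]
  exact Finset.sum_congr rfl fun _ _ => by ring

theorem colDistSq_sumDiffBlocks_inr_inr (P Q : Matrix ι ι ℝ) (p q : ι) :
    colDistSq (sumDiffBlocks P Q) (.inr p) (.inr q) = (colDistSq P p q + colDistSq Q p q) / 2 := by
  simp only [colDistSq, Fintype.sum_sum_type, sumDiffBlocks, fromBlocks_apply₁₂,
    fromBlocks_apply₂₂, Matrix.smul_apply, Matrix.add_apply, Matrix.sub_apply, smul_eq_mul,
    ← Finset.sum_add_distrib, Finset.sum_div]
  exact Finset.sum_congr rfl fun _ _ => by ring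

theorem colDistSq_sumDiffBlocks_inl_inr_self (P Q : Matrix ι ι ℝ) (p : ι) :
    colDistSq (sumDiffBlocks P Q) (.inl p) (.inr p) = 2 * ∑ r, Q r p ^ 2 := by
  simp only [colDistSq, Fintype.sum_sum_type, sumDiffBlocks, fromBlocks_apply₁₁,
    fromBlocks_apply₁₂, fromBlocks_apply₂₁, fromBlocks_apply₂₂, Matrix.smul_apply,
    Matrix.add_apply, Matrix.sub_apply, smul_eq_mul, ← Finset.sum_add_distrib, Finset.mul_sum]
  exact Finset.sum_congr rfl fun _ _ => by ring

end SumDiffBlocks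

section AllOnes

def allOnes (ι : Type) : Matrix ι ι ℝ := of fun _ _ => 1

variable {ι : Type}

theorem ne_of_pos_allOnes_sub_one [DecidableEq ι] {p q : ι} (h : 0 < (allOnes ι - 1) p q) :
    p ≠ q := by
  rintro rfl
  simp [allOnes] at h

theorem allOnes_mul_allOnes [Fintype ι] :
    allOnes ι * allOnes ι = (Fintype.card ι : ℝ) • allOnes ι := by
  ext i j
  simp [allOnes, Matrix.mul_apply]

variable [Fintype ι] [DecidableEq ι]

theorem isPInv_smul_one_sub_allOnes [Nonempty ι] :
    IsPInv ((Fintype.card ι : ℝ) • 1 - allOnes ι)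
      ((Fintype.card ι : ℝ)⁻¹ • (1 - (Fintype.card ι : ℝ)⁻¹ • allOnes ι)) := by
  have hc : (Fintype.card ι : ℝ) ≠ 0 := Nat.cast_ne_zero.mpr Fintype.card_ne_zero
  have hJ : IsIdempotentElem ((Fintype.card ι : ℝ)⁻¹ • allOnes ι) := by
    rw [IsIdempotentElem, smul_mul_smul_comm, allOnes_mul_allOnes, smul_smul, mul_assoc,
      inv_mul_cancel₀ hc, mul_one]
  have hA : (Fintype.card ι : ℝ) • 1 - allOnes ι =
      (Fintype.card ι : ℝ) • (1 - (Fintype.card ι : ℝ)⁻¹ • allOnes ι) := by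
    rw [smul_sub, smul_smul, mul_inv_cancel₀ hc, one_smul]
  rw [hA]
  refine IsPInv.smul_of_isIdempotentElem hJ.one_sub ?_ hc
  rw [transpose_sub, transpose_one, transpose_smul]
  rfl

theorem colDistSq_smul_one_sub_allOnes (c : ℝ) {p q : ι} (hpq : p ≠ q) :
    colDistSq (c • (1 - c • allOnes ι)) p q = 2 * c ^ 2 := by
  have h : ∀ r, (c • (1 - c • allOnes ι)) r p - (c • (1 - c • allOnes ι)) r q =
      (if r = p then c else 0) - (if r = q then c else 0) + 0 := fun r => by
    simp only [Matrix.smul_apply, Matrix.sub_apply, one_apply, allOnes, of_apply, smul_eq_mul]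
    split_ifs <;> ring
  simp only [colDistSq, h, sum_sq_ite_sub_ite_add hpq]
  simp
  ring

/-- Sherman–Morrison for `diag d - 1 1ᵀ`. -/
theorem diagonal_sub_allOnes_mul {d : ι → ℝ} (hd : ∀ i, d i ≠ 0) (hs : ∑ i, (d i)⁻¹ ≠ 1) :
    (diagonal d - allOnes ι) *
      (diagonal d⁻¹ + (1 - ∑ i, (d i)⁻¹)⁻¹ • vecMulVec d⁻¹ d⁻¹) = 1 := by
  have hs' : 1 - ∑ i, (d i)⁻¹ ≠ 0 := sub_ne_zero.mpr hs.symm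
  ext i j
  simp only [Matrix.mul_apply, Matrix.sub_apply, Matrix.add_apply, Matrix.smul_apply, allOnes,
    of_apply, diagonal_apply, vecMulVec_apply, smul_eq_mul, sub_mul, ite_mul, zero_mul, one_mul,
    Finset.sum_sub_distrib, Finset.sum_ite_eq, Finset.sum_ite_eq', Finset.mem_univ, if_true,
    Finset.sum_add_distrib, ← Finset.sum_mul, ← Finset.mul_sum, Pi.inv_apply]
  generalize ∑ i, (d i)⁻¹ = s at hs' ⊢
  have hdi := hd i
  rw [one_apply]
  split_ifs with hij
  · subst hij
    field_simp
    ring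
  · field_simp
    ring

theorem colDistSq_diagonal_add_smul_vecMulVec (u : ι → ℝ) (c : ℝ) {p q : ι} (hpq : p ≠ q) :
    colDistSq (diagonal u + c • vecMulVec u u) p q =
      u p ^ 2 + u q ^ 2 + 2 * c * (u p - u q) * (u p ^ 2 - u q ^ 2) +
        c ^ 2 * (u p - u q) ^ 2 * ∑ r, u r ^ 2 := by
  have h : ∀ r, (diagonal u + c • vecMulVec u u) r p - (diagonal u + c • vecMulVec u u) r q =
      (if r = p then u p else 0) - (if r = q then u q else 0) + c * (u p - u q) * u r :=
    fun r => by
      simp only [Matrix.add_apply, Matrix.smul_apply, diagonal_apply, vecMulVec_apply,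
        smul_eq_mul]
      split_ifs <;> subst_vars <;> ring
  simp only [colDistSq, h, sum_sq_ite_sub_ite_add hpq, mul_pow, ← Finset.mul_sum]
  ring

theorem sum_sq_diagonal_add_smul_vecMulVec (u : ι → ℝ) (c : ℝ) (p : ι) :
    ∑ r, ((diagonal u + c • vecMulVec u u) r p) ^ 2 =
      u p ^ 2 + 2 * c * u p ^ 3 + c ^ 2 * u p ^ 2 * ∑ r, u r ^ 2 := by
  have h : ∀ r, (diagonal u + c • vecMulVec u u) r p =
      (if r = p then u p else 0) + c * u p * u r := fun r => by
    simp only [Matrix.add_apply, Matrix.smul_apply, diagonal_apply, vecMulVec_apply, smul_eq_mul]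
    split_ifs <;> subst_vars <;> ring
  simp only [h, sum_sq_ite_add, mul_pow, ← Finset.mul_sum]
  ring

end AllOnes

theorem lap_submatrix {ι : Type} [Fintype ι] [DecidableEq ι] {n : ℕ}
    (Φ : Matrix (Fin n) (Fin n) ℝ) (e : ι ≃ Fin n) :
    (lap Φ).submatrix e e =
      diagonal (fun a => ∑ b, Φ.submatrix e e a b) - Φ.submatrix e e := by
  ext a b
  simp only [lap, submatrix_apply, Matrix.sub_apply, diagonal_apply, e.apply_eq_iff_eq,
    e.sum_comp (Φ (e a))]

theorem diagonal_sum_sub_fromBlocks {ι : Type} [Fintype ι] [DecidableEq ι]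
    (X Y : Matrix ι ι ℝ) :
    diagonal (fun a => ∑ b, fromBlocks X Y Y X a b) - fromBlocks X Y Y X =
      sumDiffBlocks (diagonal (fun p => ∑ q, (X + Y) p q) - (X + Y))
        (diagonal (fun p => ∑ q, (X + Y) p q) - (X + Y) + (2 : ℝ) • Y) := by
  have hdiag : diagonal (fun a => ∑ b, fromBlocks X Y Y X a b) =
      fromBlocks (diagonal fun p => ∑ q, (X + Y) p q) 0 0 (diagonal fun p => ∑ q, (X + Y) p q) := by
    rw [fromBlocks_diagonal]
    congr 1
    funext p
    rcases p with p | p <;> simp [Fintype.sum_sum_type, Finset.sum_add_distrib, add_comm]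
  rw [hdiag, sub_eq_add_neg, fromBlocks_neg, fromBlocks_add, fromBlocks_eq_sumDiffBlocks]
  congr 1 <;> module

theorem sum_ite_val_lt {m k : ℕ} (hk : k ≤ m) (x y : ℝ) :
    ∑ p : Fin m, (if (p : ℕ) < k then x else y) = k * x + (m - k) * y := by
  have h : ∀ p : Fin m, (if (p : ℕ) < k then x else y) =
      y + (if (p : ℕ) < k then 1 else 0) * (x - y) := fun p => by
    split_ifs <;> ring
  simp only [h, Finset.sum_add_distrib, ← Finset.sum_mul, Finset.sum_boole,
    Fin.card_filter_val_lt, min_eq_right hk, Finset.sum_const, Finset.card_univ, Fintype.card_fin,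
    nsmul_eq_mul]
  ring

namespace TwoClique

variable {m k : ℕ}

def bridgeIndicator (k : ℕ) (p : Fin m) : ℝ := if (p : ℕ) < k then 1 else 0

noncomputable def antisymDiag (m k : ℕ) (p : Fin m) : ℝ := m + 2 * bridgeIndicator k p

theorem eq_and_lt_of_pos_diagonal_bridgeIndicator {p q : Fin m}
    (h : 0 < diagonal (bridgeIndicator k) p q) : p = q ∧ (p : ℕ) < k := by
  simp only [diagonal_apply, bridgeIndicator] at h
  split_ifs at h with h₁ h₂
  · exact ⟨h₁, h₂⟩
  all_goals norm_num at h

theorem advPhi_submatrix_finSumFinEquiv (m k : ℕ) :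
    (advPhi (m + m) k).submatrix finSumFinEquiv finSumFinEquiv =
      fromBlocks (allOnes _ - 1) (diagonal (bridgeIndicator k))
        (diagonal (bridgeIndicator k)) (allOnes _ - 1) := by
  have hm : (m + m) / 2 = m := by omega
  ext (p | p) (q | q) <;>
    simp only [advPhi, allOnes, bridgeIndicator, submatrix_apply, of_apply, fromBlocks_apply₁₁,
      fromBlocks_apply₁₂, fromBlocks_apply₂₁, fromBlocks_apply₂₂, Matrix.sub_apply,
      one_apply, diagonal_apply, finSumFinEquiv_apply_left, finSumFinEquiv_apply_right,
      Fin.val_castAdd, Fin.val_natAdd, hm, ne_eq, Fin.ext_iff] <;>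
    split_ifs <;> norm_num <;> omega

theorem lap_advPhi_submatrix_finSumFinEquiv (m k : ℕ) :
    (lap (advPhi (m + m) k)).submatrix finSumFinEquiv finSumFinEquiv =
      sumDiffBlocks ((m : ℝ) • 1 - allOnes _) (diagonal (antisymDiag m k) - allOnes _) := by
  have hrow : ∀ p : Fin m, ∑ q, (allOnes (Fin m) - 1 + diagonal (bridgeIndicator k) : Matrix _ _ ℝ) p q =
      m - 1 + bridgeIndicator k p := fun p => by
    simp [allOnes, Finset.sum_add_distrib, diagonal_apply, one_apply]
  rw [lap_submatrix, advPhi_submatrix_finSumFinEquiv, diagonal_sum_sub_fromBlocks]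
  simp only [hrow]
  congr 1 <;> ext p q <;>
    simp only [antisymDiag, Matrix.add_apply, Matrix.sub_apply, Matrix.smul_apply, diagonal_apply,
      one_apply] <;>
    split_ifs <;> ring

theorem antisymDiag_pos (p : Fin m) : 0 < antisymDiag m k p := by
  have : (0 : ℝ) < m := Nat.cast_pos.mpr p.pos
  unfold antisymDiag bridgeIndicator
  split_ifs <;> linarith

theorem inv_antisymDiag (p : Fin m) :
    (antisymDiag m k p)⁻¹ = if (p : ℕ) < k then ((m : ℝ) + 2)⁻¹ else (m : ℝ)⁻¹ := by
  unfold antisymDiag bridgeIndicator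
  split_ifs <;> norm_num

theorem sum_inv_antisymDiag (hkm : k ≤ m) :
    ∑ p, (antisymDiag m k p)⁻¹ = k / ((m : ℝ) + 2) + (m - k) / m := by
  simp only [inv_antisymDiag, sum_ite_val_lt hkm, div_eq_mul_inv]

theorem sum_inv_antisymDiag_sq (hkm : k ≤ m) :
    ∑ p, (antisymDiag m k p)⁻¹ ^ 2 = k / ((m : ℝ) + 2) ^ 2 + (m - k) / (m : ℝ) ^ 2 := by
  simp only [inv_antisymDiag, apply_ite (· ^ 2), sum_ite_val_lt hkm, div_eq_mul_inv, inv_pow]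

theorem one_sub_sum_inv_antisymDiag (hm : m ≠ 0) (hkm : k ≤ m) :
    1 - ∑ p, (antisymDiag m k p)⁻¹ = 2 * k / (m * (m + 2)) := by
  have hm' : (m : ℝ) ≠ 0 := Nat.cast_ne_zero.mpr hm
  rw [sum_inv_antisymDiag hkm]
  field_simp
  ring

noncomputable def symPInv (m : ℕ) : Matrix (Fin m) (Fin m) ℝ :=
  (m : ℝ)⁻¹ • (1 - (m : ℝ)⁻¹ • allOnes (Fin m))

noncomputable def antisymInv (m k : ℕ) : Matrix (Fin m) (Fin m) ℝ :=
  diagonal (antisymDiag m k)⁻¹ +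
    (1 - ∑ p, (antisymDiag m k p)⁻¹)⁻¹ • vecMulVec (antisymDiag m k)⁻¹ (antisymDiag m k)⁻¹

noncomputable def lapPInv (m k : ℕ) : Matrix (Fin m ⊕ Fin m) (Fin m ⊕ Fin m) ℝ :=
  sumDiffBlocks (symPInv m) (antisymInv m k)

theorem isPInv_lap_advPhi_submatrix (hk : k ≠ 0) (hkm : k ≤ m) :
    IsPInv ((lap (advPhi (m + m) k)).submatrix finSumFinEquiv finSumFinEquiv)
      (lapPInv m k) := by
  have hm : m ≠ 0 := by omega
  have : Nonempty (Fin m) := ⟨⟨0, by omega⟩⟩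
  have hsym := isPInv_smul_one_sub_allOnes (ι := Fin m)
  rw [Fintype.card_fin] at hsym
  have hanti : IsPInv (diagonal (antisymDiag m k) - allOnes (Fin m)) (antisymInv m k) := by
    refine IsPInv.of_mul_eq_one (diagonal_sub_allOnes_mul (fun p => (antisymDiag_pos p).ne') ?_)
    rw [← sub_ne_zero, ← neg_ne_zero, neg_sub, one_sub_sum_inv_antisymDiag hm hkm]
    positivity
  rw [lap_advPhi_submatrix_finSumFinEquiv]
  exact hsym.sumDiffBlocks hanti

/-- `(n (n + 4)² + 32 k² - 32 k) / (4 k² (n + 4)²)` at `n = 2m`. -/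
noncomputable def maxColDistSq (m k : ℝ) : ℝ := m / (2 * k ^ 2) + 2 * (k - 1) / (k * (m + 2) ^ 2)

theorem two_mul_sum_sq_antisymInv (hkm : k ≤ m) {p : Fin m} (hp : (p : ℕ) < k) :
    2 * ∑ r, antisymInv m k r p ^ 2 = maxColDistSq m k := by
  have hm' : (m : ℝ) ≠ 0 := Nat.cast_ne_zero.mpr (by omega)
  have hk' : (k : ℝ) ≠ 0 := Nat.cast_ne_zero.mpr (by omega)
  simp only [antisymInv, sum_sq_diagonal_add_smul_vecMulVec, Pi.inv_apply,
    one_sub_sum_inv_antisymDiag (by omega) hkm, inv_div, sum_inv_antisymDiag_sq hkm]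
  rw [inv_antisymDiag, if_pos hp, maxColDistSq]
  field_simp
  ring

theorem bridged_pair_le_maxColDistSq {m k : ℝ} (hk : 2 ≤ k) (hkm : k ≤ m) :
    1 / m ^ 2 + 1 / (m + 2) ^ 2 ≤ maxColDistSq m k := by
  have hm : 0 < m := by linarith
  have h₁ : 1 / m ^ 2 ≤ m / (2 * k ^ 2) := by
    rw [div_le_div_iff₀ (by positivity) (by positivity)]
    nlinarith [mul_le_mul hkm hkm (by linarith) (by linarith)]
  have h₂ : 1 / (m + 2) ^ 2 ≤ 2 * (k - 1) / (k * (m + 2) ^ 2) := by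
    rw [div_le_div_iff₀ (by positivity) (by positivity)]
    nlinarith [sq_nonneg (m + 2)]
  unfold maxColDistSq
  linarith

theorem unbridged_pair_le_maxColDistSq {m k : ℝ} (hk : 1 ≤ k) (hkm : k + 2 ≤ m) :
    2 / m ^ 2 ≤ maxColDistSq m k := by
  have hm : 0 < m := by linarith
  have h₁ : 2 / m ^ 2 ≤ m / (2 * k ^ 2) := by
    rw [div_le_div_iff₀ (by positivity) (by positivity)]
    nlinarith [mul_le_mul hkm hkm (by linarith) (by linarith), sq_nonneg (m - 4)]
  have h₂ : 0 ≤ 2 * (k - 1) / (k * (m + 2) ^ 2) := by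
    apply div_nonneg <;> nlinarith [sq_nonneg (m + 2)]
  unfold maxColDistSq
  linarith

theorem mixed_pair_le_maxColDistSq {m k : ℝ} (hk : 1 ≤ k) (hkm : k + 1 ≤ m) :
    3 / (2 * m ^ 2) + 1 / (2 * (m + 2) ^ 2) + 1 / (2 * k * m ^ 2) - 1 / (2 * k * (m + 2) ^ 2) +
      1 / (2 * k ^ 2 * m) ≤ maxColDistSq m k := by
  have hm : 0 < m := by linarith
  have hk₀ : 0 < k := by linarith
  have h₁ : (3 * k + 1) / (2 * k * m ^ 2) ≤ (m ^ 2 - 1) / (2 * k ^ 2 * m) := by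
    have hk₁ : k ≤ m - 1 := by linarith
    have hcubic : (3 * k + 1) * k ≤ (m ^ 2 - 1) * m := by
      nlinarith [mul_le_mul hk₁ hk₁ hk₀.le (by linarith), sq_nonneg (m - 1)]
    rw [div_le_div_iff₀ (by positivity) (by positivity)]
    nlinarith [mul_le_mul_of_nonneg_left hcubic (by positivity : (0 : ℝ) ≤ 2 * k * m)]
  have h₂ : 0 ≤ 3 * (k - 1) / (2 * k * (m + 2) ^ 2) := by
    apply div_nonneg <;> nlinarith [sq_nonneg (m + 2)]
  have h : maxColDistSq m k - (3 / (2 * m ^ 2) + 1 / (2 * (m + 2) ^ 2) + 1 / (2 * k * m ^ 2) -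
      1 / (2 * k * (m + 2) ^ 2) + 1 / (2 * k ^ 2 * m)) =
      (m ^ 2 - 1) / (2 * k ^ 2 * m) - (3 * k + 1) / (2 * k * m ^ 2) +
        3 * (k - 1) / (2 * k * (m + 2) ^ 2) := by
    unfold maxColDistSq
    field_simp
    ring
  linarith

theorem colDistSq_symPInv_add_colDistSq_antisymInv_le (hk : k ≠ 0) (hkm : k ≤ m)
    {p q : Fin m} (hpq : p ≠ q) :
    (colDistSq (symPInv m) p q + colDistSq (antisymInv m k) p q) / 2 ≤ maxColDistSq m k := by
  have hm' : (m : ℝ) ≠ 0 := Nat.cast_ne_zero.mpr (by omega)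
  have hk' : (k : ℝ) ≠ 0 := Nat.cast_ne_zero.mpr hk
  have hpq' : (p : ℕ) ≠ q := Fin.val_ne_of_ne hpq
  rw [symPInv, colDistSq_smul_one_sub_allOnes _ hpq, antisymInv,
    colDistSq_diagonal_add_smul_vecMulVec _ _ hpq, one_sub_sum_inv_antisymDiag (by omega) hkm,
    inv_div]
  simp only [Pi.inv_apply]
  rw [sum_inv_antisymDiag_sq hkm, inv_antisymDiag, inv_antisymDiag]
  by_cases hp : (p : ℕ) < k <;> by_cases hq : (q : ℕ) < k <;> simp only [hp, hq, if_true, if_false]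
  · calc _ = 1 / (m : ℝ) ^ 2 + 1 / ((m : ℝ) + 2) ^ 2 := by simp only [one_div, inv_pow]; ring
      _ ≤ _ := bridged_pair_le_maxColDistSq (by norm_cast; omega) (by norm_cast)
  · calc _ = _ := by field_simp; ring
      _ ≤ _ := mixed_pair_le_maxColDistSq (by norm_cast; omega) (by norm_cast; omega)
  · calc _ = _ := by field_simp; ring
      _ ≤ _ := mixed_pair_le_maxColDistSq (by norm_cast; omega) (by norm_cast; omega)
  · calc _ = 2 / (m : ℝ) ^ 2 := by ring
      _ ≤ _ := unbridged_pair_le_maxColDistSq (by norm_cast; omega) (by norm_cast; omega)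

theorem colDistSq_lapPInv_inl_inr (hkm : k ≤ m) {p : Fin m} (hp : (p : ℕ) < k) :
    colDistSq (lapPInv m k) (.inl p) (.inr p) = maxColDistSq m k := by
  rw [lapPInv, colDistSq_sumDiffBlocks_inl_inr_self, two_mul_sum_sq_antisymInv hkm hp]

theorem colDistSq_lapPInv_le (hk : k ≠ 0) (hkm : k ≤ m) {a b : Fin m ⊕ Fin m}
    (hab : 0 < advPhi (m + m) k (finSumFinEquiv a) (finSumFinEquiv b)) :
    colDistSq (lapPInv m k) a b ≤ maxColDistSq m k := by
  rw [← submatrix_apply (advPhi (m + m) k), advPhi_submatrix_finSumFinEquiv] at hab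
  rcases a with p | p <;> rcases b with q | q <;>
    simp only [fromBlocks_apply₁₁, fromBlocks_apply₁₂, fromBlocks_apply₂₁,
      fromBlocks_apply₂₂] at hab
  · rw [lapPInv, colDistSq_sumDiffBlocks_inl_inl]
    exact colDistSq_symPInv_add_colDistSq_antisymInv_le hk hkm (ne_of_pos_allOnes_sub_one hab)
  · obtain ⟨rfl, hp⟩ := eq_and_lt_of_pos_diagonal_bridgeIndicator hab
    exact (colDistSq_lapPInv_inl_inr hkm hp).le
  · obtain ⟨rfl, hp⟩ := eq_and_lt_of_pos_diagonal_bridgeIndicator hab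
    exact (colDistSq_comm _ _ _).trans_le (colDistSq_lapPInv_inl_inr hkm hp).le
  · rw [lapPInv, colDistSq_sumDiffBlocks_inr_inr]
    exact colDistSq_symPInv_add_colDistSq_antisymInv_le hk hkm (ne_of_pos_allOnes_sub_one hab)

end TwoClique

open TwoClique

theorem stmt14_general (n k : ℕ) (hev : Even n) (hk1 : 1 ≤ k) (hk : k ≤ n / 2)
    (M : Matrix (Fin n) (Fin n) ℝ) (hM : IsPInv (lap (advPhi n k)) M) :
    (∀ i j : Fin n, (i : ℕ) < k → (j : ℕ) = (i : ℕ) + n / 2 →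
      ∑ r, (M r i - M r j) ^ 2 =
        ((n : ℝ) * ((n : ℝ) + 4) ^ 2 + 32 * (k : ℝ) ^ 2 - 32 * k) /
          (4 * (k : ℝ) ^ 2 * ((n : ℝ) + 4) ^ 2)) ∧
    (∀ i j : Fin n, 0 < advPhi n k i j →
      ∑ r, (M r i - M r j) ^ 2 ≤
        ((n : ℝ) * ((n : ℝ) + 4) ^ 2 + 32 * (k : ℝ) ^ 2 - 32 * k) /
          (4 * (k : ℝ) ^ 2 * ((n : ℝ) + 4) ^ 2)) := by
  obtain ⟨m, rfl⟩ := hev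
  have hkm : k ≤ m := by omega
  set e : Fin m ⊕ Fin m ≃ Fin (m + m) := finSumFinEquiv
  have hN : M.submatrix e e = lapPInv m k :=
    (hM.submatrix e).unique (isPInv_lap_advPhi_submatrix (by omega) hkm)
  have hcol (a b) : colDistSq M (e a) (e b) = colDistSq (lapPInv m k) a b := by
    rw [← hN, colDistSq_submatrix]
  have hT : (((m + m : ℕ) : ℝ) * (((m + m : ℕ) : ℝ) + 4) ^ 2 + 32 * (k : ℝ) ^ 2 - 32 * k) /
      (4 * (k : ℝ) ^ 2 * (((m + m : ℕ) : ℝ) + 4) ^ 2) = maxColDistSq m k := by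
    have hk' : (k : ℝ) ≠ 0 := by positivity
    unfold maxColDistSq
    push_cast
    field_simp
    ring
  rw [hT]
  refine ⟨fun i j hi hj => ?_, fun i j hij => ?_⟩
  · obtain ⟨p, rfl⟩ : ∃ p : Fin m, e (.inl p) = i := ⟨⟨i, by omega⟩, Fin.ext rfl⟩
    obtain rfl : j = e (.inr p) := Fin.ext (by simp [e, hj]; omega)
    exact (hcol _ _).trans (colDistSq_lapPInv_inl_inr hkm hi)
  · obtain ⟨a, rfl⟩ := e.surjective i
    obtain ⟨b, rfl⟩ := e.surjective j
    exact (hcol a b).trans_le (colDistSq_lapPInv_le (by omega) hkm hij)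

/-- Laplacian pseudoinverse column differences for the advantageous
two-clique graph `G(n,k)`: value at the bridge edges, and maximality there. -/
theorem stmt14 (n k : ℕ) (hn : 6 ≤ n) (hev : Even n) (hk1 : 1 ≤ k) (hk : k ≤ n / 2)
    (M : Matrix (Fin n) (Fin n) ℝ) (hM : IsPInv (lap (advPhi n k)) M) :
    (∀ i j : Fin n, (i : ℕ) < k → (j : ℕ) = (i : ℕ) + n / 2 →
      ∑ r, (M r i - M r j) ^ 2 =
        ((n : ℝ) * ((n : ℝ) + 4) ^ 2 + 32 * (k : ℝ) ^ 2 - 32 * k) /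
          (4 * (k : ℝ) ^ 2 * ((n : ℝ) + 4) ^ 2)) ∧
    (∀ i j : Fin n, 0 < advPhi n k i j →
      ∑ r, (M r i - M r j) ^ 2 ≤
        ((n : ℝ) * ((n : ℝ) + 4) ^ 2 + 32 * (k : ℝ) ^ 2 - 32 * k) /
          (4 * (k : ℝ) ^ 2 * ((n : ℝ) + 4) ^ 2)) :=
  stmt14_general n k hev hk1 hk M hM
end
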